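/- A 1-periodic (in y₁) harmonic function Ψ on the strip (0,1)×(a,∞) ⊂ ℝ² that is bounded converges exponentially fast as y₂ → +∞ to a constant ψ₀, i.e., there exist C, α > 0 with |Ψ(y) − ψ₀| ≤ C e^{−α y₂}; moreover ψ₀ equals the limit of the horizontal averages ∫₀¹ Ψ(y₁, y₂) dy₁. -/

import Mathlib

open Filter Topology

section AuxiliaryLemmas
open Real

set_option maxHeartbeats 1000000


lemma ode_le_aux (lam M b : ℝ) (hlam : 0 < lam) (v w : ℝ → ℝ)
    (hv : ∀ t, b ≤ t → HasDerivAt v (w t) t)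
    (hw : ∀ t, b ≤ t → HasDerivAt w (lam^2 * v t) t)
    (hbd : ∀ t, b ≤ t → |v t| ≤ M) :
    ∀ t, b ≤ t → v t ≤ M * exp (-(lam * (t - b))) := by
  have hM : 0 ≤ M := le_trans (abs_nonneg _) (hbd b le_rfl)
  have key : ∀ ε, 0 < ε → ∀ t, b ≤ t →
      v t ≤ M * exp (-(lam * (t - b))) + ε * exp (lam * (t - b)) := by
    intro ε hε
    by_contra hcon
    push_neg at hcon
    obtain ⟨t₀, ht₀b, ht₀⟩ := hcon
    set W : ℝ → ℝ := fun t => M * exp (-(lam * (t - b))) + ε * exp (lam * (t - b)) - v t with hWdef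
    set W' : ℝ → ℝ := fun t =>
      M * (exp (-(lam * (t - b))) * (-lam)) + ε * (exp (lam * (t - b)) * lam) - w t with hW'def
    have hlin : ∀ t : ℝ, HasDerivAt (fun s => lam * (s - b)) lam t := by
      intro t
      simpa using ((hasDerivAt_id t).sub_const b).const_mul lam
    have hWd : ∀ t, b ≤ t → HasDerivAt W (W' t) t := by
      intro t ht
      exact (((hlin t).neg.exp.const_mul M).add ((hlin t).exp.const_mul ε)).sub (hv t ht)
    have hW'd : ∀ t, b ≤ t → HasDerivAt W' (lam ^ 2 * W t) t := by
      intro t ht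
      have h1 := ((((hlin t).neg.exp.mul_const (-lam)).const_mul M).add
        (((hlin t).exp.mul_const lam).const_mul ε)).sub (hw t ht)
      refine HasDerivAt.congr_deriv h1 ?_
      simp only [hWdef, Pi.neg_apply]
      ring
    have hTdef : ∃ T, t₀ ≤ T ∧ b ≤ T ∧ 0 < W T := by
      refine ⟨max t₀ (b + Real.log ((M + 1) / ε) / lam), le_max_left _ _,
        le_trans ht₀b (le_max_left _ _), ?_⟩
      set T := max t₀ (b + Real.log ((M + 1) / ε) / lam) with hT
      have h1 : Real.log ((M + 1) / ε) / lam ≤ T - b := by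
        have := le_max_right t₀ (b + Real.log ((M + 1) / ε) / lam)
        simp only [hT]; linarith
      have h2 : (M + 1) / ε ≤ exp (lam * (T - b)) := by
        calc (M + 1) / ε = exp (Real.log ((M + 1) / ε)) := by
              rw [Real.exp_log (by positivity)]
          _ ≤ exp (lam * (T - b)) := by
              apply Real.exp_le_exp.2
              rw [div_le_iff₀ hlam] at h1; linarith [h1]
      have h3 : M + 1 ≤ ε * exp (lam * (T - b)) := by
        rw [div_le_iff₀ hε] at h2; linarith [h2]
      have h4 : v T ≤ M := le_trans (le_abs_self _) (hbd T (le_trans ht₀b (le_max_left _ _)))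
      have h5 : 0 ≤ M * exp (-(lam * (T - b))) := by positivity
      simp only [hWdef]; linarith
    obtain ⟨T, ht₀T, hbT, hWT⟩ := hTdef
    have hcontW : ContinuousOn W (Set.Icc b T) := fun t ht =>
      (hWd t ht.1).continuousAt.continuousWithinAt
    obtain ⟨ts, htsmem, htsmin⟩ :=
      isCompact_Icc.exists_isMinOn ⟨t₀, ht₀b, ht₀T⟩ hcontW
    have hWneg : W ts < 0 := by
      have := htsmin ⟨ht₀b, ht₀T⟩
      have h0 : W t₀ < 0 := by simp only [hWdef]; linarith
      exact lt_of_le_of_lt this h0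
    have hWb : 0 < W b := by
      have h4 : v b ≤ M := le_trans (le_abs_self _) (hbd b le_rfl)
      simp only [hWdef, sub_self, mul_zero, neg_zero, Real.exp_zero, mul_one]
      linarith
    have hbts : b < ts := by
      rcases lt_or_eq_of_le htsmem.1 with h | h
      · exact h
      · exact absurd (h ▸ hWneg) (not_lt.2 hWb.le)
    have htsT : ts < T := by
      rcases lt_or_eq_of_le htsmem.2 with h | h
      · exact h
      · exact absurd (h ▸ hWneg) (not_lt.2 hWT.le)
    have hloc : IsLocalMin W ts := htsmin.isLocalMin (Icc_mem_nhds hbts htsT)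
    have hW'ts : W' ts = 0 := hloc.hasDerivAt_eq_zero (hWd ts htsmem.1)
    -- second derivative negative : W' positive just to the left
    have hL : lam ^ 2 * W ts < 0 := by nlinarith [hWneg, sq_nonneg lam, pow_pos hlam 2]
    have hslope := (hW'd ts htsmem.1)
    rw [hasDerivAt_iff_tendsto_slope] at hslope
    have hev : ∀ᶠ s in 𝓝[<] ts, 0 < W' s := by
      have h1 : ∀ᶠ s in 𝓝[≠] ts, slope W' ts s < 0 :=
        hslope.eventually (Filter.Tendsto.eventually_lt_const hL tendsto_id) |>.mono (fun s hs => hs)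
      have h2 : 𝓝[<] ts ≤ 𝓝[≠] ts := nhdsWithin_mono _ (fun s hs => ne_of_lt hs)
      filter_upwards [h2 h1, self_mem_nhdsWithin] with s hs hs'
      rw [slope_def_field, hW'ts, sub_zero] at hs
      have hne : s - ts < 0 := sub_neg.2 hs'
      rcases div_neg_iff.1 hs with h | h
      · exact h.1
      · exact absurd h.2 (not_lt.2 hne.le)
    rw [Filter.eventually_iff, mem_nhdsLT_iff_exists_Ioo_subset] at hev
    obtain ⟨l, hl, hIoo⟩ := hev
    set t₁ := max l b with ht₁
    have ht₁ts : t₁ < ts := max_lt hl hbts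
    have hmono : StrictMonoOn W (Set.Icc t₁ ts) := by
      apply strictMonoOn_of_deriv_pos (convex_Icc _ _)
      · intro s hs
        exact (hWd s (le_trans (le_max_right l b) hs.1)).continuousAt.continuousWithinAt
      · intro s hs
        rw [interior_Icc] at hs
        have hs' : s ∈ Set.Ioo l ts := ⟨lt_of_le_of_lt (le_max_left l b) hs.1, hs.2⟩
        rw [(hWd s (le_trans (le_max_right l b) hs.1.le)).deriv]
        exact hIoo hs'
    have h1 : W t₁ < W ts :=
      hmono (Set.left_mem_Icc.2 ht₁ts.le) (Set.right_mem_Icc.2 ht₁ts.le) ht₁ts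
    have h2 : W ts ≤ W t₁ := htsmin ⟨le_max_right l b, le_trans ht₁ts.le htsmem.2⟩
    linarith
  intro t ht
  apply le_of_forall_pos_le_add
  intro δ hδ
  have h := key (δ / exp (lam * (t - b))) (by positivity) t ht
  calc v t ≤ M * exp (-(lam * (t - b))) + δ / exp (lam * (t - b)) * exp (lam * (t - b)) := h
    _ = M * exp (-(lam * (t - b))) + δ := by
        rw [div_mul_cancel₀ _ (Real.exp_ne_zero _)]

lemma ode_abs_le (lam M b : ℝ) (hlam : 0 < lam) (v w : ℝ → ℝ)
    (hv : ∀ t, b ≤ t → HasDerivAt v (w t) t)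
    (hw : ∀ t, b ≤ t → HasDerivAt w (lam^2 * v t) t)
    (hbd : ∀ t, b ≤ t → |v t| ≤ M) :
    ∀ t, b ≤ t → |v t| ≤ M * exp (-(lam * (t - b))) := by
  have h1 := ode_le_aux lam M b hlam v w hv hw hbd
  have h2 := ode_le_aux lam M b hlam (fun t => -v t) (fun t => -w t)
    (fun t ht => (hv t ht).neg) (fun t ht => (hw t ht).neg.congr_deriv (by ring))
    (fun t ht => by rw [abs_neg]; exact hbd t ht)
  intro t ht
  rw [abs_le]
  have h2' := h2 t ht
  exact ⟨by linarith, h1 t ht⟩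

lemma const_of_deriv2_zero_bounded (a : ℝ) (f g : ℝ → ℂ) (M : ℝ)
    (hf : ∀ t, a < t → HasDerivAt f (g t) t)
    (hg : ∀ t, a < t → HasDerivAt g 0 t)
    (hbd : ∀ t, a < t → ‖f t‖ ≤ M) :
    ∀ s t, a < s → a < t → f s = f t := by
  have hgc : ∀ s t, a < s → s ≤ t → g t = g s := by
    intro s t hs hst
    exact constant_of_has_deriv_right_zero
      (fun x hx => (hg x (lt_of_lt_of_le hs hx.1)).continuousAt.continuousWithinAt)
      (fun x hx => (hg x (lt_of_lt_of_le hs hx.1)).hasDerivWithinAt) t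
      (Set.right_mem_Icc.2 hst)
  set k := g (a + 1) with hk
  have hgk : ∀ t, a < t → g t = k := by
    intro t ht
    rcases le_total t (a + 1) with h | h
    · exact (hgc t (a + 1) ht h).symm
    · exact hgc (a + 1) t (by linarith) h
  have hstep : ∀ s t, a < s → s ≤ t → f t - f s = (t - s) • k := by
    intro s t hs hst
    have hh : ∀ x, a < x → HasDerivAt (fun y => f y - y • k) 0 x := by
      intro x hx
      have := (hf x hx).sub ((hasDerivAt_id x).smul_const k)
      rw [hgk x hx] at this
      exact this.congr_deriv (by simp)
    have := constant_of_has_deriv_right_zero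
      (f := fun y => f y - y • k)
      (fun x hx => (hh x (lt_of_lt_of_le hs hx.1)).continuousAt.continuousWithinAt)
      (fun x hx => (hh x (lt_of_lt_of_le hs hx.1)).hasDerivWithinAt) t
      (Set.right_mem_Icc.2 hst)
    have h2 : f t - t • k = f s - s • k := this
    rw [sub_smul]
    rw [sub_eq_sub_iff_sub_eq_sub] at h2
    linear_combination h2
  have hM : 0 ≤ M := le_trans (norm_nonneg _) (hbd (a + 1) (by linarith))
  have hk0 : k = 0 := by
    by_contra hne
    have hkpos : 0 < ‖k‖ := norm_pos_iff.2 hne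
    have hd : 0 ≤ (2 * M + 1) / ‖k‖ := by positivity
    obtain ⟨s, t, hs, ht⟩ : ∃ s t : ℝ, s = a + 1 ∧ t = s + (2 * M + 1) / ‖k‖ := ⟨_, _, rfl, rfl⟩
    have hst : s ≤ t := by rw [ht]; linarith
    have h1 := hstep s t (by rw [hs]; linarith) hst
    have h2 : ‖f t - f s‖ ≤ 2 * M := by
      calc ‖f t - f s‖ ≤ ‖f t‖ + ‖f s‖ := norm_sub_le _ _
        _ ≤ 2 * M := by
            have := hbd t (by rw [ht, hs]; linarith)
            have := hbd s (by rw [hs]; linarith)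
            linarith
    rw [h1, norm_smul, Real.norm_eq_abs] at h2
    have h3 : t - s = (2 * M + 1) / ‖k‖ := by rw [ht]; ring
    rw [h3, abs_of_nonneg (by positivity), div_mul_cancel₀ _ (ne_of_gt hkpos)] at h2
    linarith
  intro s t hs ht
  rcases le_total s t with h | h
  · have h0 : f t - f s = 0 := by rw [hstep s t hs h, hk0]; simp
    exact (sub_eq_zero.1 h0).symm
  · have h0 : f s - f t = 0 := by rw [hstep t s ht h, hk0]; simp
    exact sub_eq_zero.1 h0

lemma summable_exp_neg_abs_int (K : ℝ) (hK : 0 < K) :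
    Summable (fun n : ℤ => Real.exp (-(K * |(n : ℝ)|))) := by
  have hgeo : Summable (fun n : ℕ => Real.exp (-K) ^ n) :=
    summable_geometric_of_lt_one (Real.exp_nonneg _) (Real.exp_lt_one_iff.2 (by linarith))
  have h1 : ∀ n : ℕ, Real.exp (-(K * |((n : ℤ) : ℝ)|)) = Real.exp (-K) ^ n := by
    intro n
    rw [← Real.exp_nat_mul]
    congr 1
    push_cast
    rw [abs_of_nonneg (by positivity)]
    ring
  apply Summable.of_nat_of_neg
  · exact hgeo.congr fun n => (h1 n).symm
  · apply hgeo.congr fun n => ?_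
    rw [← h1 n]
    congr 2
    push_cast
    rw [abs_neg]

lemma slice_hasDerivAt_snd {G : ℝ × ℝ → ℝ} {s : Set (ℝ × ℝ)} {n : WithTop ℕ∞}
    (hG : ContDiffOn ℝ n G s) (hn : 1 ≤ n) (hs : IsOpen s) {p : ℝ × ℝ} (hp : p ∈ s) :
    HasDerivAt (fun t => G (p.1, t)) (fderiv ℝ G p (0, 1)) p.2 := by
  have h1 : HasFDerivAt G (fderiv ℝ G p) p :=
    ((hG.contDiffAt (hs.mem_nhds hp)).differentiableAt (lt_of_lt_of_le zero_lt_one hn).ne').hasFDerivAt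
  have h2 : HasDerivAt (fun t : ℝ => ((p.1, t) : ℝ × ℝ)) ((0 : ℝ), (1 : ℝ)) p.2 :=
    (hasDerivAt_const p.2 p.1).prodMk (hasDerivAt_id p.2)
  have h1' : HasFDerivAt G (fderiv ℝ G p) ((fun t : ℝ => ((p.1, t) : ℝ × ℝ)) p.2) := by
    simpa using h1
  exact h1'.comp_hasDerivAt p.2 h2

lemma slice_hasDerivAt_fst {G : ℝ × ℝ → ℝ} {s : Set (ℝ × ℝ)} {n : WithTop ℕ∞}
    (hG : ContDiffOn ℝ n G s) (hn : 1 ≤ n) (hs : IsOpen s) {p : ℝ × ℝ} (hp : p ∈ s) :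
    HasDerivAt (fun x => G (x, p.2)) (fderiv ℝ G p (1, 0)) p.1 := by
  have h1 : HasFDerivAt G (fderiv ℝ G p) p :=
    ((hG.contDiffAt (hs.mem_nhds hp)).differentiableAt (lt_of_lt_of_le zero_lt_one hn).ne').hasFDerivAt
  have h2 : HasDerivAt (fun x : ℝ => ((x, p.2) : ℝ × ℝ)) ((1 : ℝ), (0 : ℝ)) p.1 :=
    (hasDerivAt_id p.1).prodMk (hasDerivAt_const p.1 p.2)
  have h1' : HasFDerivAt G (fderiv ℝ G p) ((fun x : ℝ => ((x, p.2) : ℝ × ℝ)) p.1) := by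
    simpa using h1
  exact h1'.comp_hasDerivAt p.1 h2

lemma deriv_under_integral (a : ℝ) (f g : ℝ × ℝ → ℂ)
    (hf : ContinuousOn f {p : ℝ × ℝ | a < p.2}) (hg : ContinuousOn g {p : ℝ × ℝ | a < p.2})
    (hd : ∀ p : ℝ × ℝ, a < p.2 → HasDerivAt (fun t => f (p.1, t)) (g p) p.2)
    (t₀ : ℝ) (ht₀ : a < t₀) :
    HasDerivAt (fun t => ∫ x in (0:ℝ)..1, f (x, t)) (∫ x in (0:ℝ)..1, g (x, t₀)) t₀ := by
  set ε := (t₀ - a) / 2 with hε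
  have hεpos : 0 < ε := by simp [hε]; linarith
  have hslice : ∀ t : ℝ, a < t → Continuous (fun x => f (x, t)) := by
    intro t ht
    exact hf.comp_continuous (continuous_id.prodMk continuous_const) fun x => ht
  have hgslice : ∀ t : ℝ, a < t → Continuous (fun x => g (x, t)) := by
    intro t ht
    exact hg.comp_continuous (continuous_id.prodMk continuous_const) fun x => ht
  have hK : IsCompact (Set.Icc (0:ℝ) 1 ×ˢ Set.Icc (t₀ - ε) (t₀ + ε)) :=
    isCompact_Icc.prod isCompact_Icc
  have hKU : (Set.Icc (0:ℝ) 1 ×ˢ Set.Icc (t₀ - ε) (t₀ + ε)) ⊆ {p : ℝ × ℝ | a < p.2} := by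
    rintro ⟨x, t⟩ ⟨_, ht⟩
    have := ht.1
    simp only [Set.mem_setOf_eq]
    simp only [hε] at this ⊢
    linarith
  obtain ⟨B, hB⟩ := hK.exists_bound_of_continuousOn (hg.mono hKU)
  have key := intervalIntegral.hasDerivAt_integral_of_dominated_loc_of_deriv_le
    (F := fun t x => f (x, t)) (F' := fun t x => g (x, t)) (x₀ := t₀) (a := (0:ℝ)) (b := 1)
    (bound := fun _ => B) (μ := MeasureTheory.volume) (Metric.ball_mem_nhds t₀ hεpos) ?_ ?_ ?_ ?_ ?_ ?_
  · exact key.2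
  · filter_upwards [isOpen_Ioi.mem_nhds ht₀] with t ht
    exact ((hslice t ht).aestronglyMeasurable).restrict
  · exact (hslice t₀ ht₀).intervalIntegrable 0 1
  · exact ((hgslice t₀ ht₀).aestronglyMeasurable).restrict
  · apply MeasureTheory.ae_of_all
    intro x hx t ht
    apply hB
    rw [Set.uIoc_of_le (by norm_num : (0:ℝ) ≤ 1)] at hx
    constructor
    · exact ⟨le_of_lt hx.1, hx.2⟩
    · simp only [Metric.mem_ball, Real.dist_eq] at ht
      rcases abs_lt.1 ht with ⟨h1, h2⟩
      exact ⟨by linarith, by linarith⟩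
  · exact intervalIntegrable_const
  · apply MeasureTheory.ae_of_all
    intro x hx t ht
    exact hd (x, t) (by
      simp only [Metric.mem_ball, Real.dist_eq] at ht
      rcases abs_lt.1 ht with ⟨h1, h2⟩
      simp only [Set.mem_setOf_eq, hε] at *
      linarith)

end AuxiliaryLemmas

set_option maxHeartbeats 1000000 in
/-- a bounded, smooth, 1-periodic (in `y₁`) harmonic function on
the half-strip `{y₂ > a}` converges exponentially fast, as `y₂ → +∞`, to a
constant `ψ₀`, which is the limit of the horizontal averages. -/
theorem bounded_periodic_harmonic_exponential_convergence
    (a : ℝ) (Ψ : ℝ → ℝ → ℝ)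
    (hbdd : ∃ M : ℝ, ∀ y₁ y₂ : ℝ, a < y₂ → |Ψ y₁ y₂| ≤ M)
    (hsmooth : ContDiffOn ℝ (⊤ : ℕ∞) (fun p : ℝ × ℝ => Ψ p.1 p.2) {p : ℝ × ℝ | a < p.2})
    (hper : ∀ y₁ y₂ : ℝ, Ψ (y₁ + 1) y₂ = Ψ y₁ y₂)
    (hharm : ∀ y₁ y₂ : ℝ, a < y₂ →
      deriv (fun t => deriv (fun s => Ψ s y₂) t) y₁
        + deriv (fun t => deriv (fun s => Ψ y₁ s) t) y₂ = 0) :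
    ∃ ψ₀ C α : ℝ, 0 < C ∧ 0 < α ∧
      (∀ y₁ y₂ : ℝ, a < y₂ → |Ψ y₁ y₂ - ψ₀| ≤ C * Real.exp (-α * y₂)) ∧
      Tendsto (fun y₂ => ∫ y₁ in (0:ℝ)..1, Ψ y₁ y₂) atTop (𝓝 ψ₀) := by
  classical
  obtain ⟨M, hM⟩ := hbdd
  have hM0 : 0 ≤ M := le_trans (abs_nonneg _) (hM 0 (a + 1) (by linarith))
  have hUopen : IsOpen {p : ℝ × ℝ | a < p.2} := isOpen_lt continuous_const continuous_snd
  set U : Set (ℝ × ℝ) := {p : ℝ × ℝ | a < p.2} with hUdef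
  set F : ℝ × ℝ → ℝ := (fun p : ℝ × ℝ => Ψ p.1 p.2) with hFdef
  have hFsmooth : ContDiffOn ℝ (⊤ : ℕ∞) F U := hsmooth
  have hFcont : ContinuousOn F U := hFsmooth.continuousOn
  set G1 : ℝ × ℝ → ℝ := fun p => fderiv ℝ F p (1, 0) with hG1def
  set G2 : ℝ × ℝ → ℝ := fun p => fderiv ℝ F p (0, 1) with hG2def
  have hfdsmooth : ContDiffOn ℝ (⊤ : ℕ∞) (fderiv ℝ F) U :=
    hFsmooth.fderiv_of_isOpen hUopen (by simp)
  have hG1smooth : ContDiffOn ℝ (⊤ : ℕ∞) G1 U := hfdsmooth.clm_apply contDiffOn_const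
  have hG2smooth : ContDiffOn ℝ (⊤ : ℕ∞) G2 U := hfdsmooth.clm_apply contDiffOn_const
  set H1 : ℝ × ℝ → ℝ := fun p => fderiv ℝ G1 p (1, 0) with hH1def
  set H2 : ℝ × ℝ → ℝ := fun p => fderiv ℝ G2 p (0, 1) with hH2def
  have hH1cont : ContinuousOn H1 U :=
    (((hG1smooth.fderiv_of_isOpen hUopen (by simp) :
      ContDiffOn ℝ (⊤ : ℕ∞) (fderiv ℝ G1) U)).clm_apply contDiffOn_const).continuousOn
  have hH2cont : ContinuousOn H2 U :=
    (((hG2smooth.fderiv_of_isOpen hUopen (by simp) :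
      ContDiffOn ℝ (⊤ : ℕ∞) (fderiv ℝ G2) U)).clm_apply contDiffOn_const).continuousOn
  have hG1cont : ContinuousOn G1 U := hG1smooth.continuousOn
  have hG2cont : ContinuousOn G2 U := hG2smooth.continuousOn
  -- slice derivatives
  have hsl1 : ∀ p : ℝ × ℝ, a < p.2 → HasDerivAt (fun x => Ψ x p.2) (G1 p) p.1 :=
    fun p hp => slice_hasDerivAt_fst hFsmooth (by simp) hUopen hp
  have hsl2 : ∀ p : ℝ × ℝ, a < p.2 → HasDerivAt (fun t => Ψ p.1 t) (G2 p) p.2 :=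
    fun p hp => slice_hasDerivAt_snd hFsmooth (by simp) hUopen hp
  have hsl1G1 : ∀ p : ℝ × ℝ, a < p.2 → HasDerivAt (fun x => G1 (x, p.2)) (H1 p) p.1 :=
    fun p hp => slice_hasDerivAt_fst hG1smooth (by simp) hUopen hp
  have hsl2G2 : ∀ p : ℝ × ℝ, a < p.2 → HasDerivAt (fun t => G2 (p.1, t)) (H2 p) p.2 :=
    fun p hp => slice_hasDerivAt_snd hG2smooth (by simp) hUopen hp
  -- periodicity of Ψ and G1 in the first variable
  have hG1per : ∀ x t : ℝ, a < t → G1 (x + 1, t) = G1 (x, t) := by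
    intro x t ht
    have e1 : ∀ s : ℝ, deriv (fun s' => Ψ s' t) s = G1 (s, t) :=
      fun s => (hsl1 (s, t) ht).deriv
    calc G1 (x + 1, t) = deriv (fun s => Ψ s t) (x + 1) := (e1 _).symm
      _ = deriv (fun s => Ψ (s + 1) t) x := (deriv_comp_add_const _ 1 x).symm
      _ = deriv (fun s => Ψ s t) x := by congr 1; funext s; exact hper s t
      _ = G1 (x, t) := e1 x
  -- harmonicity in terms of H1 H2
  have hHarm : ∀ x t : ℝ, a < t → H2 (x, t) = -H1 (x, t) := by
    intro x t ht
    have e1 : (fun s : ℝ => deriv (fun s' => Ψ s' t) s) = fun s => G1 (s, t) :=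
      funext fun s => (hsl1 (s, t) ht).deriv
    have h1 : deriv (fun s : ℝ => deriv (fun s' => Ψ s' t) s) x = H1 (x, t) := by
      rw [e1]; exact (hsl1G1 (x, t) ht).deriv
    have heq : (fun t' : ℝ => deriv (fun s => Ψ x s) t') =ᶠ[𝓝 t] fun t' => G2 (x, t') := by
      filter_upwards [isOpen_Ioi.mem_nhds ht] with t' ht'
      exact (hsl2 (x, t') ht').deriv
    have h2 : deriv (fun t' : ℝ => deriv (fun s => Ψ x s) t') t = H2 (x, t) :=
      (((hsl2G2 (x, t) ht)).congr_of_eventuallyEq heq).deriv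
    have h3 := hharm x t ht
    rw [h1, h2] at h3
    linarith
  -- the exponentials
  set k : ℤ → ℂ := fun n => ((2 * Real.pi * (-(n : ℝ)) : ℝ) : ℂ) * Complex.I with hkdef
  set e : ℤ → ℝ → ℂ := fun n x =>
    Complex.exp (((2 * Real.pi * (-(n : ℝ)) * x : ℝ) : ℂ) * Complex.I) with hedef
  have he_cont : ∀ n : ℤ, Continuous (e n) := by
    intro n
    apply Complex.continuous_exp.comp
    exact (Complex.continuous_ofReal.comp (by continuity)).mul continuous_const
  have he_norm : ∀ (n : ℤ) (x : ℝ), ‖e n x‖ = 1 := by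
    intro n x
    simp only [hedef]
    rw [Complex.norm_exp_ofReal_mul_I]
  have he_deriv : ∀ (n : ℤ) (x : ℝ), HasDerivAt (e n) (k n * e n x) x := by
    intro n x
    have h1 : HasDerivAt (fun x : ℝ => ((2 * Real.pi * (-(n : ℝ)) * x : ℝ) : ℂ) * Complex.I)
        (k n) x := by
      have h0 : HasDerivAt (fun x : ℝ => (2 * Real.pi * (-(n : ℝ)) * x : ℝ))
          (2 * Real.pi * (-(n : ℝ))) x := by
        simpa using (hasDerivAt_id x).const_mul (2 * Real.pi * (-(n : ℝ)))
      simpa [hkdef] using (h0.ofReal_comp).mul_const Complex.I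
    simpa [hedef, mul_comm] using h1.cexp
  have he_zero : ∀ n : ℤ, e n 0 = 1 := by
    intro n; simp only [hedef]; norm_num
  have he_one : ∀ n : ℤ, e n 1 = 1 := by
    intro n
    simp only [hedef]
    have : (((2 * Real.pi * (-(n : ℝ)) * 1 : ℝ) : ℂ) * Complex.I)
        = (-n : ℤ) * (2 * Real.pi * Complex.I) := by push_cast; ring
    rw [this, Complex.exp_int_mul_two_pi_mul_I]
  have hk_sq : ∀ n : ℤ, -(k n) ^ 2 = (((2 * Real.pi * |(n : ℝ)|) ^ 2 : ℝ) : ℂ) := by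
    intro n
    rw [hkdef]
    have h1 : ((2 * Real.pi * |(n : ℝ)|) ^ 2 : ℝ) = (2 * Real.pi * (n : ℝ)) ^ 2 := by
      rw [mul_pow, mul_pow, sq_abs]; ring
    rw [h1]
    have h2 : (((2 * Real.pi * (-(n : ℝ)) : ℝ) : ℂ) * Complex.I) ^ 2
        = -((((2 * Real.pi * (n : ℝ)) ^ 2 : ℝ)) : ℂ) := by
      rw [mul_pow, Complex.I_sq]
      push_cast
      ring
    rw [h2, neg_neg]
  -- the Fourier coefficients and their derivatives
  set c : ℤ → ℝ → ℂ := fun n t => ∫ x in (0:ℝ)..1, e n x * (Ψ x t : ℂ) with hcdef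
  set d : ℤ → ℝ → ℂ := fun n t => ∫ x in (0:ℝ)..1, e n x * (G2 (x, t) : ℂ) with hddef
  set d2 : ℤ → ℝ → ℂ := fun n t => ∫ x in (0:ℝ)..1, e n x * (H2 (x, t) : ℂ) with hd2def
  have hcont_mul : ∀ (n : ℤ) (g : ℝ × ℝ → ℝ), ContinuousOn g U →
      ContinuousOn (fun p : ℝ × ℝ => e n p.1 * (g p : ℂ)) U := by
    intro n g hg
    exact ((he_cont n).comp continuous_fst).continuousOn.mul
      (Complex.continuous_ofReal.comp_continuousOn hg)
  have hcderiv : ∀ (n : ℤ) (t : ℝ), a < t → HasDerivAt (c n) (d n t) t := by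
    intro n t ht
    exact deriv_under_integral a (fun p => e n p.1 * (Ψ p.1 p.2 : ℂ))
      (fun p => e n p.1 * (G2 p : ℂ)) (hcont_mul n F hFcont) (hcont_mul n G2 hG2cont)
      (fun p hp => ((hsl2 p hp).ofReal_comp).const_mul (e n p.1)) t ht
  have hdderiv : ∀ (n : ℤ) (t : ℝ), a < t → HasDerivAt (d n) (d2 n t) t := by
    intro n t ht
    exact deriv_under_integral a (fun p => e n p.1 * (G2 p : ℂ))
      (fun p => e n p.1 * (H2 p : ℂ)) (hcont_mul n G2 hG2cont) (hcont_mul n H2 hH2cont)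
      (fun p hp => ((hsl2G2 p hp).ofReal_comp).const_mul (e n p.1)) t ht
  -- basic bound on coefficients
  have hbound : ∀ (n : ℤ) (t : ℝ), a < t → ‖c n t‖ ≤ M := by
    intro n t ht
    have h1 : ‖c n t‖ ≤ M * |1 - 0| := by
      apply intervalIntegral.norm_integral_le_of_norm_le_const
      intro x hx
      rw [norm_mul, he_norm n x, one_mul, Complex.norm_real, Real.norm_eq_abs]
      exact hM x t ht
    simpa using h1
  -- integration by parts and harmonicity: the ODE
  have hIBP : ∀ (n : ℤ) (t : ℝ), a < t →
      d2 n t = (((2 * Real.pi * |(n : ℝ)|) ^ 2 : ℝ) : ℂ) * c n t := by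
    intro n t ht
    have hG1s : ∀ x : ℝ, HasDerivAt (fun x : ℝ => (G1 (x, t) : ℂ)) ((H1 (x, t) : ℂ)) x :=
      fun x => (hsl1G1 (x, t) ht).ofReal_comp
    have hPsis : ∀ x : ℝ, HasDerivAt (fun x : ℝ => (Ψ x t : ℂ)) ((G1 (x, t) : ℂ)) x :=
      fun x => (hsl1 (x, t) ht).ofReal_comp
    have hcont1 : Continuous fun x => k n * e n x := continuous_const.mul (he_cont n)
    have hcontH1 : Continuous fun x : ℝ => (H1 (x, t) : ℂ) :=
      Complex.continuous_ofReal.comp (hH1cont.comp_continuous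
        (continuous_id.prodMk continuous_const) fun x => ht)
    have hcontG1 : Continuous fun x : ℝ => (G1 (x, t) : ℂ) :=
      Complex.continuous_ofReal.comp (hG1cont.comp_continuous
        (continuous_id.prodMk continuous_const) fun x => ht)
    have hke : ∀ g : ℝ → ℂ, (∫ x in (0:ℝ)..1, k n * e n x * g x)
        = k n * ∫ x in (0:ℝ)..1, e n x * g x := by
      intro g
      simp_rw [mul_assoc]
      exact intervalIntegral.integral_const_mul _ _
    have h2 : (∫ x in (0:ℝ)..1, e n x * (G1 (x, t) : ℂ)) = -(k n) * c n t := by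
      have hibp := intervalIntegral.integral_mul_deriv_eq_deriv_mul
        (u := e n) (u' := fun x => k n * e n x)
        (v := fun x : ℝ => (Ψ x t : ℂ)) (v' := fun x : ℝ => (G1 (x, t) : ℂ))
        (fun x _ => he_deriv n x) (fun x _ => hPsis x)
        (hcont1.intervalIntegrable 0 1) (hcontG1.intervalIntegrable 0 1)
      have hibp2 : (∫ x in (0:ℝ)..1, e n x * (G1 (x, t) : ℂ))
          = e n 1 * ((Ψ 1 t : ℝ) : ℂ) - e n 0 * ((Ψ 0 t : ℝ) : ℂ)
            - ∫ x in (0:ℝ)..1, k n * e n x * ((Ψ x t : ℝ) : ℂ) := hibp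
      have hb : ((Ψ 1 t : ℝ) : ℂ) = ((Ψ 0 t : ℝ) : ℂ) := by
        exact_mod_cast congrArg (fun r : ℝ => (r : ℂ)) (by simpa using hper 0 t)
      rw [hibp2, he_one n, he_zero n, hb, hke (fun x => ((Ψ x t : ℝ) : ℂ))]
      simp only [hcdef]
      ring
    have h3 : (∫ x in (0:ℝ)..1, e n x * (H1 (x, t) : ℂ))
        = (k n) ^ 2 * c n t := by
      have hibp := intervalIntegral.integral_mul_deriv_eq_deriv_mul
        (u := e n) (u' := fun x => k n * e n x)
        (v := fun x : ℝ => (G1 (x, t) : ℂ)) (v' := fun x : ℝ => (H1 (x, t) : ℂ))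
        (fun x _ => he_deriv n x) (fun x _ => hG1s x)
        (hcont1.intervalIntegrable 0 1) (hcontH1.intervalIntegrable 0 1)
      have hibp2 : (∫ x in (0:ℝ)..1, e n x * (H1 (x, t) : ℂ))
          = e n 1 * ((G1 (1, t) : ℝ) : ℂ) - e n 0 * ((G1 (0, t) : ℝ) : ℂ)
            - ∫ x in (0:ℝ)..1, k n * e n x * ((G1 (x, t) : ℝ) : ℂ) := hibp
      have hb : ((G1 (1, t) : ℝ) : ℂ) = ((G1 (0, t) : ℝ) : ℂ) := by
        exact_mod_cast congrArg (fun r : ℝ => (r : ℂ)) (by simpa using hG1per 0 t ht)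
      rw [hibp2, he_one n, he_zero n, hb, hke (fun x => ((G1 (x, t) : ℝ) : ℂ)), h2]
      ring
    have h5 : d2 n t = -(∫ x in (0:ℝ)..1, e n x * (H1 (x, t) : ℂ)) := by
      simp only [hd2def]
      rw [← intervalIntegral.integral_neg]
      apply intervalIntegral.integral_congr
      intro x hx
      show e n x * (H2 (x, t) : ℂ) = -(e n x * (H1 (x, t) : ℂ))
      rw [hHarm x t ht]
      push_cast
      ring
    rw [h5, h3, ← hk_sq n]
    ring
  -- exponential decay of nonzero coefficients
  have hdecay : ∀ n : ℤ, n ≠ 0 → ∀ t : ℝ, a + 1 ≤ t →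
      ‖c n t‖ ≤ 2 * M * Real.exp (-(2 * Real.pi * |(n : ℝ)| * (t - (a + 1)))) := by
    intro n hn t htt
    have hlam : 0 < 2 * Real.pi * |(n : ℝ)| := by
      have h0 : (0:ℝ) < |(n : ℝ)| := abs_pos.2 (by exact_mod_cast hn)
      have := Real.pi_pos
      positivity
    have hat : ∀ s : ℝ, a + 1 ≤ s → a < s := fun s hs => by linarith
    have hre := ode_abs_le (2 * Real.pi * |(n : ℝ)|) M (a + 1) hlam
      (fun s => (c n s).re) (fun s => (d n s).re)
      (fun s hs => Complex.reCLM.hasFDerivAt.comp_hasDerivAt s (hcderiv n s (hat s hs)))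
      (fun s hs => by
        have h1 := Complex.reCLM.hasFDerivAt.comp_hasDerivAt s (hdderiv n s (hat s hs))
        have h2 : Complex.reCLM (d2 n s) = (2 * Real.pi * |(n : ℝ)|) ^ 2 * (c n s).re := by
          rw [hIBP n s (hat s hs)]
          generalize (2 * Real.pi * |(n : ℝ)|) ^ 2 = R
          simp
        rwa [h2] at h1)
      (fun s hs => le_trans (Complex.abs_re_le_norm _)
        (le_trans (le_of_eq rfl) (hbound n s (hat s hs))))
      t htt
    have him := ode_abs_le (2 * Real.pi * |(n : ℝ)|) M (a + 1) hlam
      (fun s => (c n s).im) (fun s => (d n s).im)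
      (fun s hs => Complex.imCLM.hasFDerivAt.comp_hasDerivAt s (hcderiv n s (hat s hs)))
      (fun s hs => by
        have h1 := Complex.imCLM.hasFDerivAt.comp_hasDerivAt s (hdderiv n s (hat s hs))
        have h2 : Complex.imCLM (d2 n s) = (2 * Real.pi * |(n : ℝ)|) ^ 2 * (c n s).im := by
          rw [hIBP n s (hat s hs)]
          generalize (2 * Real.pi * |(n : ℝ)|) ^ 2 = R
          simp
        rwa [h2] at h1)
      (fun s hs => le_trans (Complex.abs_im_le_norm _)
        (le_trans (le_of_eq rfl) (hbound n s (hat s hs))))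
      t htt
    calc ‖c n t‖ = ‖c n t‖ := rfl
      _ ≤ |(c n t).re| + |(c n t).im| := Complex.norm_le_abs_re_add_abs_im _
      _ ≤ 2 * M * Real.exp (-(2 * Real.pi * |(n : ℝ)| * (t - (a + 1)))) := by
          have hre' : |(c n t).re| ≤ M * Real.exp (-(2 * Real.pi * |(n : ℝ)| * (t - (a + 1)))) := hre
          have him' : |(c n t).im| ≤ M * Real.exp (-(2 * Real.pi * |(n : ℝ)| * (t - (a + 1)))) := him
          linarith
  -- constancy of the zeroth coefficient
  have hc0const : ∀ t, a < t → c 0 t = c 0 (a + 1) := by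
    have hd20 : ∀ t, a < t → HasDerivAt (d 0) 0 t := by
      intro t ht
      have h1 := hdderiv 0 t ht
      rw [hIBP 0 t ht] at h1
      simpa using h1
    intro t ht
    exact const_of_deriv2_zero_bounded a (c 0) (d 0) M (hcderiv 0) hd20
      (fun s hs => hbound 0 s hs) t (a + 1) ht (by linarith)
  have hc0real : ∀ t : ℝ, c 0 t = ((∫ x in (0:ℝ)..1, Ψ x t : ℝ) : ℂ) := by
    intro t
    simp only [hcdef]
    rw [← intervalIntegral.integral_ofReal]
    apply intervalIntegral.integral_congr
    intro x hx
    show e 0 x * ((Ψ x t : ℝ) : ℂ) = ((Ψ x t : ℝ) : ℂ)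
    have h0 : e 0 x = 1 := by simp only [hedef]; norm_num
    rw [h0, one_mul]
  set ψ₀ : ℝ := ∫ x in (0:ℝ)..1, Ψ x (a + 1) with hψdef
  have havg : ∀ t, a < t → (∫ x in (0:ℝ)..1, Ψ x t) = ψ₀ := by
    intro t ht
    have h1 := hc0const t ht
    rw [hc0real t, hc0real (a + 1)] at h1
    exact_mod_cast h1
  have hψbd : |ψ₀| ≤ M := by
    have h1 : ‖∫ x in (0:ℝ)..1, Ψ x (a+1)‖ ≤ M * |1 - 0| :=
      intervalIntegral.norm_integral_le_of_norm_le_const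
        (fun x hx => by rw [Real.norm_eq_abs]; exact hM x (a+1) (by linarith))
    simp only [Real.norm_eq_abs] at h1
    simpa [hψdef] using h1
  -- summation constant
  set S : ℝ := ∑' n : ℤ, Real.exp (-(2 * Real.pi * |(n : ℝ)|)) with hSdef
  have hSummS : Summable (fun n : ℤ => Real.exp (-(2 * Real.pi * |(n : ℝ)|))) :=
    summable_exp_neg_abs_int (2 * Real.pi) (by positivity)
  have hS0 : 0 ≤ S := tsum_nonneg (fun n => (Real.exp_pos _).le)
  -- main pointwise estimate in the far region
  have hmain : ∀ t : ℝ, a + 2 ≤ t → ∀ y₁ : ℝ,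
      |Ψ y₁ t - ψ₀| ≤ 2 * M * S * Real.exp (2 * Real.pi * (a + 2))
        * Real.exp (-(2 * Real.pi) * t) := by
    intro t ht2 y₁
    have hta : a < t := by linarith
    have ht1 : a + 1 ≤ t := by linarith
    have hper' : Function.Periodic (fun x : ℝ => ((Ψ x t : ℝ) : ℂ)) 1 := by
      intro x
      show ((Ψ (x + 1) t : ℝ) : ℂ) = ((Ψ x t : ℝ) : ℂ)
      exact_mod_cast hper x t
    have hcontP : Continuous fun x : ℝ => ((Ψ x t : ℝ) : ℂ) :=
      Complex.continuous_ofReal.comp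
        (hFcont.comp_continuous (continuous_id.prodMk continuous_const) fun x => hta)
    have hliftcont : Continuous hper'.lift := continuous_coinduced_dom.mpr hcontP
    set fc : C(AddCircle (1:ℝ), ℂ) := ⟨hper'.lift, hliftcont⟩ with hfcdef
    have hfc_coe : ∀ x : ℝ, fc (x : AddCircle (1:ℝ)) = ((Ψ x t : ℝ) : ℂ) := fun x => rfl
    have hcoeff : ∀ n : ℤ, fourierCoeff (fc : AddCircle (1:ℝ) → ℂ) n = c n t := by
      intro n
      rw [fourierCoeff_eq_intervalIntegral (fc : AddCircle (1:ℝ) → ℂ) n 0]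
      have h1 : ((1:ℝ)/(1:ℝ)) = 1 := by norm_num
      rw [h1, one_smul, show (0:ℝ) + 1 = 1 from zero_add 1]
      simp only [hcdef]
      apply intervalIntegral.integral_congr
      intro x hx
      show fourier (-n) ((x : ℝ) : AddCircle (1:ℝ)) • fc ((x : ℝ) : AddCircle (1:ℝ))
        = e n x * ((Ψ x t : ℝ) : ℂ)
      rw [hfc_coe x, fourier_coe_apply, smul_eq_mul]
      congr 1
      simp only [hedef]
      congr 1
      push_cast
      ring
    -- uniform coefficient bound for summability
    have hcb : ∀ n : ℤ, ‖c n t‖ ≤ 2 * M * Real.exp (-(2 * Real.pi * |(n : ℝ)|)) := by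
      intro n
      by_cases hn : n = 0
      · subst hn
        have h1 : ((0:ℤ) : ℝ) = 0 := by norm_num
        rw [h1]
        simp only [abs_zero, mul_zero, neg_zero, Real.exp_zero, mul_one]
        calc ‖c 0 t‖ ≤ M := hbound 0 t hta
          _ ≤ 2 * M := by linarith
      · have h1 := hdecay n hn t ht1
        have h2 : Real.exp (-(2 * Real.pi * |(n : ℝ)| * (t - (a + 1))))
            ≤ Real.exp (-(2 * Real.pi * |(n : ℝ)|)) := by
          apply Real.exp_le_exp.2
          have hn1 : (1:ℝ) ≤ |(n : ℝ)| := by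
            have h3 : (1:ℤ) ≤ |n| := Int.one_le_abs hn
            calc (1:ℝ) ≤ ((|n| : ℤ) : ℝ) := by exact_mod_cast h3
              _ = |(n : ℝ)| := by push_cast; ring
          nlinarith [mul_nonneg (mul_nonneg Real.pi_pos.le (abs_nonneg ((n:ℝ))))
            (sub_nonneg.2 ht2)]
        calc ‖c n t‖ ≤ 2 * M * Real.exp (-(2 * Real.pi * |(n : ℝ)| * (t - (a + 1)))) := h1
          _ ≤ 2 * M * Real.exp (-(2 * Real.pi * |(n : ℝ)|)) :=
            mul_le_mul_of_nonneg_left h2 (by linarith)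
    have hSummCoeff : Summable fun n : ℤ => fourierCoeff (fc : AddCircle (1:ℝ) → ℂ) n := by
      apply Summable.of_norm
      exact Summable.of_nonneg_of_le (fun n => norm_nonneg _)
        (fun n => by rw [hcoeff n]; exact hcb n) (hSummS.mul_left (2 * M))
    have hps0 := has_pointwise_sum_fourier_series_of_summable hSummCoeff
      ((y₁ : ℝ) : AddCircle (1:ℝ))
    set f : ℤ → ℂ := fun n => fourierCoeff (fc : AddCircle (1:ℝ) → ℂ) n
      • fourier n ((y₁ : ℝ) : AddCircle (1:ℝ)) with hfdef2
    have hps : HasSum f (fc ((y₁ : ℝ) : AddCircle (1:ℝ))) := hps0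
    have hf0 : f 0 = ((ψ₀ : ℝ) : ℂ) := by
      simp only [hfdef2]
      rw [hcoeff 0, fourier_zero, smul_eq_mul, mul_one, hc0real t, havg t hta]
    have hupd := hps.update 0 0
    have hval : (0 : ℂ) - f 0 + fc ((y₁ : ℝ) : AddCircle (1:ℝ)) = ((Ψ y₁ t - ψ₀ : ℝ) : ℂ) := by
      rw [hf0, hfc_coe y₁]
      push_cast
      ring
    rw [hval] at hupd
    set Q : ℝ := 2 * M * Real.exp (-(2 * Real.pi * (t - (a + 2)))) with hQdef
    have hQ0 : 0 ≤ Q := by positivity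
    have hQb : ∀ n : ℤ, n ≠ 0 → ‖c n t‖ ≤ Q * Real.exp (-(2 * Real.pi * |(n : ℝ)|)) := by
      intro n hn
      have h1 := hdecay n hn t ht1
      have hn1 : (1:ℝ) ≤ |(n : ℝ)| := by
        have h3 : (1:ℤ) ≤ |n| := Int.one_le_abs hn
        calc (1:ℝ) ≤ ((|n| : ℤ) : ℝ) := by exact_mod_cast h3
          _ = |(n : ℝ)| := by push_cast; ring
      have h2 : Real.exp (-(2 * Real.pi * |(n : ℝ)| * (t - (a + 1))))
          ≤ Real.exp (-(2 * Real.pi * (t - (a + 2)))) * Real.exp (-(2 * Real.pi * |(n : ℝ)|)) := by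
        rw [← Real.exp_add]
        apply Real.exp_le_exp.2
        nlinarith [Real.pi_pos, mul_nonneg (sub_nonneg.2 hn1) (sub_nonneg.2 ht2)]
      calc ‖c n t‖ ≤ 2 * M * Real.exp (-(2 * Real.pi * |(n : ℝ)| * (t - (a + 1)))) := h1
        _ ≤ Q * Real.exp (-(2 * Real.pi * |(n : ℝ)|)) := by
            simp only [hQdef]
            have := Real.exp_pos (-(2 * Real.pi * |(n : ℝ)| * (t - (a + 1))))
            nlinarith [h2, Real.exp_pos (-(2 * Real.pi * |(n : ℝ)|))]
    have hterm : ∀ n : ℤ, ‖Function.update f 0 0 n‖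
        ≤ Q * Real.exp (-(2 * Real.pi * |(n : ℝ)|)) := by
      intro n
      by_cases hn : n = 0
      · subst hn
        rw [Function.update_self]
        simp only [norm_zero]
        positivity
      · rw [Function.update_of_ne hn]
        simp only [hfdef2]
        rw [norm_smul, hcoeff n]
        have h9 : ‖fourier n ((y₁ : ℝ) : AddCircle (1:ℝ))‖ = 1 := Circle.norm_coe _
        rw [h9, mul_one]
        exact hQb n hn
    have hsummQ : Summable fun n : ℤ => Q * Real.exp (-(2 * Real.pi * |(n : ℝ)|)) :=
      hSummS.mul_left Q
    have hsummnorm : Summable fun n : ℤ => ‖Function.update f 0 0 n‖ :=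
      Summable.of_nonneg_of_le (fun n => norm_nonneg _) hterm hsummQ
    have hfinal : ‖((Ψ y₁ t - ψ₀ : ℝ) : ℂ)‖ ≤ Q * S := by
      rw [← hupd.tsum_eq]
      calc ‖∑' n, Function.update f 0 0 n‖
          ≤ ∑' n, ‖Function.update f 0 0 n‖ := norm_tsum_le_tsum_norm hsummnorm
        _ ≤ ∑' n : ℤ, Q * Real.exp (-(2 * Real.pi * |(n : ℝ)|)) :=
            Summable.tsum_le_tsum hterm hsummnorm hsummQ
        _ = Q * S := by rw [tsum_mul_left]
    have habs : |Ψ y₁ t - ψ₀| ≤ Q * S := by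
      rwa [Complex.norm_real, Real.norm_eq_abs] at hfinal
    have hQS : Q * S = 2 * M * S * Real.exp (2 * Real.pi * (a + 2))
        * Real.exp (-(2 * Real.pi) * t) := by
      have h1 : -(2 * Real.pi * (t - (a + 2))) = 2 * Real.pi * (a + 2) + -(2 * Real.pi) * t := by
        ring
      rw [hQdef, h1, Real.exp_add]
      ring
    linarith [habs, le_of_eq hQS]
  -- final assembly
  refine ⟨ψ₀, 2 * M * (S + 1) * Real.exp (2 * Real.pi * (a + 2)) + 1, 2 * Real.pi, ?_, ?_, ?_, ?_⟩
  · have hC0 : 0 ≤ 2 * M * (S + 1) * Real.exp (2 * Real.pi * (a + 2)) := by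
      apply mul_nonneg (mul_nonneg (by linarith) (by linarith))
      exact (Real.exp_pos _).le
    linarith
  · exact Real.two_pi_pos
  · intro y₁ t ht
    rcases le_or_gt (a + 2) t with h | h
    · have h1 := hmain t h y₁
      have h2 : 2 * M * S * Real.exp (2 * Real.pi * (a + 2))
          ≤ 2 * M * (S + 1) * Real.exp (2 * Real.pi * (a + 2)) + 1 := by
        nlinarith [Real.exp_pos (2 * Real.pi * (a + 2)), hM0, hS0]
      calc |Ψ y₁ t - ψ₀|
          ≤ 2 * M * S * Real.exp (2 * Real.pi * (a + 2)) * Real.exp (-(2 * Real.pi) * t) := h1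
        _ ≤ (2 * M * (S + 1) * Real.exp (2 * Real.pi * (a + 2)) + 1)
            * Real.exp (-(2 * Real.pi) * t) :=
            mul_le_mul_of_nonneg_right h2 (Real.exp_pos _).le
    · have h1 : |Ψ y₁ t - ψ₀| ≤ 2 * M := by
        have h3 := hM y₁ t ht
        calc |Ψ y₁ t - ψ₀| ≤ |Ψ y₁ t| + |ψ₀| := abs_sub _ _
          _ ≤ 2 * M := by linarith
      have h2 : (1:ℝ) ≤ Real.exp (2 * Real.pi * (a + 2)) * Real.exp (-(2 * Real.pi) * t) := by
        rw [← Real.exp_add]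
        apply Real.one_le_exp
        nlinarith [Real.pi_pos]
      have h3 : 2 * M * (S + 1) ≤ 2 * M * (S + 1)
          * (Real.exp (2 * Real.pi * (a + 2)) * Real.exp (-(2 * Real.pi) * t)) := by
        nlinarith [mul_nonneg hM0 hS0]
      have h4 : 0 < Real.exp (-(2 * Real.pi) * t) := Real.exp_pos _
      have h5 : 0 ≤ M * S := mul_nonneg hM0 hS0
      nlinarith [h1, h3, h4, h5]
  · have hev : (fun y₂ : ℝ => ∫ y₁ in (0:ℝ)..1, Ψ y₁ y₂) =ᶠ[atTop] fun _ => ψ₀ := by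
      filter_upwards [eventually_gt_atTop a] with t ht
      exact havg t ht
    exact Tendsto.congr' hev.symm tendsto_const_nhds
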